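/- Let L → B be a BLS field with Chern connection ∇^L and let H ⊂ L be a BLS subfield (a closed subfield whose smooth sections are exactly the smooth sections of L valued in H, whose ∂̄-operator is the restriction of that of L, and such that the fiberwise orthogonal projection P_H preserves smooth sections). Then the Chern connection of H is ∇^H = P_H ∇^L restricted to sections of H, and for all smooth sections f₁, f₂ of H and (1,0)-vectors ξ, η one has the Gauss–Griffiths formula h(Θ(∇^L)(ξ,η̄)f₁, f₂) = h(Θ(∇^H)(ξ,η̄)f₁, f₂) + h(II(ξ)f₁, II(η)f₂), where II = P_H^⊥ ∇^{L,1,0} is the second fundamental form. -/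
import Mathlib


/-- **The Chern connection of a BLS subfield and the Gauss–Griffiths formula.**
Algebraic model of a BLS field `L` over a complex manifold with Chern connection
`∇^L = nab + dbar` (metric compatible), and a BLS subfield `H ⊂ L` given by the
fiberwise orthogonal projection `P` (idempotent, self-adjoint for `h`, tensorial,
preserving smooth sections and commuting with `∂̄` on sections of `H`, i.e. `∂̄`
restricts to `H`).  Sections of `H` are the sections `f` with `P f = f`.
Then the Chern connection of `H` is `∇^H = P ∘ ∇^{L,1,0}` — it satisfies the
characterizing metric identity of the Chern connection on sections of `H` — and for
all smooth sections `f₁, f₂` of `H` and `(1,0)`-fields `σ, τ` the Gauss–Griffiths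
formula holds:
`h(Θ(∇^L)(σ,τ̄)f₁, f₂) = h(Θ(∇^H)(σ,τ̄)f₁, f₂) + h(II(σ)f₁, II(τ)f₂)`,
where `II = P^⊥ ∘ ∇^{L,1,0}` is the second fundamental form. -/
theorem bls_subfield_gauss_griffiths
    (Afun X10 S : Type)
    [CommRing Afun] [Algebra ℂ Afun] [StarRing Afun]
    [AddCommGroup X10] [Module Afun X10]
    [AddCommGroup S] [Module Afun S]
    (δ δb : X10 → Afun → Afun)
    (br m10 m01 : X10 → X10 → X10)
    (hδmix : ∀ (σ τ : X10) (a : Afun),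
      δ σ (δb τ a) - δb τ (δ σ a) = δ (m10 σ τ) a + δb (m01 σ τ) a)
    (h : S → S → Afun)
    (hherm : ∀ f g : S, h f g = star (h g f))
    (haddl : ∀ f f' g : S, h (f + f') g = h f g + h f' g)
    (hsmul : ∀ (a : Afun) (f g : S), h (a • f) g = a * h f g)
    -- the Chern connection of the ambient BLS field L
    (nab dbar : X10 → S → S)
    (hcompat10 : ∀ (τ : X10) (f g : S),
      δ τ (h f g) = h (nab τ f) g + h f (dbar τ g))
    (hcompat01 : ∀ (τ : X10) (f g : S),
      δb τ (h f g) = h (dbar τ f) g + h f (nab τ g))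
    -- the orthogonal projection onto the BLS subfield H
    (P : S → S)
    (hPadd : ∀ f g : S, P (f + g) = P f + P g)
    (hPsmul : ∀ (a : Afun) (f : S), P (a • f) = a • P f)
    (hP2 : ∀ f : S, P (P f) = P f)
    (hPsym : ∀ f g : S, h (P f) g = h f (P g))
    (hPdbar : ∀ (τ : X10) (f : S), P f = f → P (dbar τ f) = dbar τ f) :
    -- ∇^H = P ∘ ∇^{L,1,0} is the Chern connection of H (characterizing identity)
    (∀ (τ : X10) (f g : S), P f = f → P g = g →
      δ τ (h f g) = h (P (nab τ f)) g + h f (dbar τ g)) ∧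
    -- Gauss–Griffiths formula
    (∀ (σ τ : X10) (f₁ f₂ : S), P f₁ = f₁ → P f₂ = f₂ →
      h (nab σ (dbar τ f₁) - dbar τ (nab σ f₁) - nab (m10 σ τ) f₁ - dbar (m01 σ τ) f₁) f₂
        = h (P (nab σ (dbar τ f₁)) - dbar τ (P (nab σ f₁))
              - P (nab (m10 σ τ) f₁) - dbar (m01 σ τ) f₁) f₂
          + h (nab σ f₁ - P (nab σ f₁)) (nab τ f₂ - P (nab τ f₂))) := by
  have hsubl : ∀ f f' g : S, h (f - f') g = h f g - h f' g := by
    intro f f' g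
    have hneg : h (-f') g = - h f' g := by
      have := hsmul (-1) f' g
      simpa [neg_one_smul] using this
    rw [sub_eq_add_neg, haddl, hneg, sub_eq_add_neg]
  have hsubr : ∀ f g g' : S, h f (g - g') = h f g - h f g' := by
    intro f g g'
    rw [hherm f, hsubl, star_sub, ← hherm, ← hherm]
  have hPsub : ∀ f g : S, P (f - g) = P f - P g := by
    intro f g
    have hneg : P (-g) = - P g := by
      have := hPsmul (-1) g
      simpa [neg_one_smul] using this
    rw [sub_eq_add_neg, hPadd, hneg, sub_eq_add_neg]
  constructor
  · intro τ f g hf hg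
    rw [hcompat10, hPsym, hg]
  · intro σ τ f₁ f₂ hf₁ hf₂
    set u := nab σ f₁ - P (nab σ f₁) with hu
    have hPu : P u = 0 := by rw [hu, hPsub, hP2, sub_self]
    -- key : hB - h(dbarτ P nabσ f₁) f₂ = - h u (nab τ f₂)
    have e1 := hcompat01 τ (nab σ f₁) f₂
    have e2 := hcompat01 τ (P (nab σ f₁)) f₂
    have e3 : h (P (nab σ f₁)) f₂ = h (nab σ f₁) f₂ := by rw [hPsym, hf₂]
    rw [e3] at e2
    have key : h (dbar τ (nab σ f₁)) f₂ - h (dbar τ (P (nab σ f₁))) f₂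
        = - h u (nab τ f₂) := by
      have := e1.symm.trans e2
      rw [hu, hsubl]
      linear_combination this
    have hA : h (P (nab σ (dbar τ f₁))) f₂ = h (nab σ (dbar τ f₁)) f₂ := by
      rw [hPsym, hf₂]
    have hC : h (P (nab (m10 σ τ) f₁)) f₂ = h (nab (m10 σ τ) f₁) f₂ := by
      rw [hPsym, hf₂]
    have hUP : h u (P (nab τ f₂)) = 0 := by
      rw [← hPsym, hPu]
      have := haddl 0 0 (nab τ f₂)
      simpa using this
    rw [hsubl, hsubl, hsubl, hsubl, hsubl, hsubl, hsubr, hA, hC, hUP]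
    linear_combination -key
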